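/- Let ω ∈ ℤⁿ and let b₀,…,b_k ∈ ℂ[x₁,…,xₙ] be nonzero polynomials such that for each j the initial form in_ω(b_j) is a single term, and assume {b₀,…,b_k} is a SAGBI basis for S = ℂ[b₀,…,b_k] with respect to ω. Let T be the ℂ-subalgebra of ℂ[x₁,…,xₙ][t] generated by (b₀)_t^ω,…,(b_k)_t^ω. Then the image of T under the evaluation homomorphism ℂ[x₁,…,xₙ][t] → ℂ[x₁,…,xₙ] sending t ↦ 1 equals S, and the image of T under the evaluation homomorphism sending t ↦ 0 equals the initial algebra in_ω(S), i.e., the ℂ-linear span of {in_ω(f) : f ∈ S, f ≠ 0}. -/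

import Mathlib

/-!
Evaluating the polynomial variable `t` at a fixed `c` is a ring homomorphism over `ℂ`, so it
maps the algebra generated by the homogenizations `(b_j)_t^ω` onto the algebra generated by
their values at `t = c`. At `t = 1` every homogenization returns `b_j`; at `t = 0` only the
terms of top ω-degree survive, giving `in_ω(b_j)`, and the SAGBI property identifies the
algebra generated by the `in_ω(b_j)` with the initial algebra `in_ω(S)`.
-/

open MvPolynomial Polynomial

noncomputable section

/-- The weighted dot product `⟨ω, α⟩ = Σ_i ω_i · α_i`. -/
def wdot {σ : Type*} (ω : σ → ℤ) (α : σ →₀ ℕ) : ℤ :=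
  α.sum fun i e => ω i * (e : ℤ)

/-- The ω-degree `v_ω(f) = max{⟨ω,α⟩ : α ∈ supp f}` (junk value `0` for `f = 0`). -/
def wdeg {σ : Type*} (ω : σ → ℤ) (f : MvPolynomial σ ℂ) : ℤ :=
  WithBot.unbotD 0 (f.support.sup fun α => (wdot ω α : WithBot ℤ))

/-- The initial form `in_ω(f)`, the sum of the terms of `f` of maximal ω-degree. -/
def initForm {σ : Type*} (ω : σ → ℤ) (f : MvPolynomial σ ℂ) : MvPolynomial σ ℂ :=
  ∑ α ∈ f.support.filter (fun α => wdot ω α = wdeg ω f), monomial α (f.coeff α)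

/-- The ω-homogenization `f_t^ω = Σ_α c_α t^{v_ω(f) − ⟨ω,α⟩} x^α ∈ ℂ[x₁,…,xₙ][t]`. -/
def homog {σ : Type*} (ω : σ → ℤ) (f : MvPolynomial σ ℂ) :
    Polynomial (MvPolynomial σ ℂ) :=
  ∑ α ∈ f.support,
    Polynomial.C (monomial α (f.coeff α)) * Polynomial.X ^ (wdeg ω f - wdot ω α).toNat

/-- The homogenized ideal `I_t^ν`, generated by `{f_t^ν : f ∈ I, f ≠ 0}`. -/
def idealHomog {σ : Type*} (ν : σ → ℤ) (I : Ideal (MvPolynomial σ ℂ)) :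
    Ideal (Polynomial (MvPolynomial σ ℂ)) :=
  Ideal.span {g | ∃ f ∈ I, f ≠ 0 ∧ g = homog ν f}

/-- The initial ideal `in_ν(I)`, generated by `{in_ν(f) : f ∈ I, f ≠ 0}`. -/
def initIdeal {σ : Type*} (ν : σ → ℤ) (I : Ideal (MvPolynomial σ ℂ)) :
    Ideal (MvPolynomial σ ℂ) :=
  Ideal.span {g | ∃ f ∈ I, f ≠ 0 ∧ g = initForm ν f}

/-- `{b i}` is a SAGBI basis for `S = ℂ[b₀,…,b_k]` with respect to `ω` if the ℂ-linear span
of `{in_ω(f) : f ∈ S, f ≠ 0}` equals the ℂ-subalgebra generated by the `in_ω(b_i)`. -/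
def IsSagbiBasis {σ : Type*} {ι : Type*} (ω : σ → ℤ) (b : ι → MvPolynomial σ ℂ) : Prop :=
  Submodule.span ℂ
      {g | ∃ f ∈ Algebra.adjoin ℂ (Set.range b), f ≠ 0 ∧ g = initForm ω f}
    = Subalgebra.toSubmodule (Algebra.adjoin ℂ (Set.range fun i => initForm ω (b i)))

lemma wdot_le_wdeg {σ : Type*} (ω : σ → ℤ) {f : MvPolynomial σ ℂ} {α : σ →₀ ℕ}
    (h : α ∈ f.support) : wdot ω α ≤ wdeg ω f := by
  have hle : (wdot ω α : WithBot ℤ) ≤ f.support.sup fun β => (wdot ω β : WithBot ℤ) :=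
    Finset.le_sup (f := fun β => (wdot ω β : WithBot ℤ)) h
  rcases hsup : f.support.sup fun β => (wdot ω β : WithBot ℤ) with _ | s
  · rw [hsup] at hle
    exact absurd hle (WithBot.not_coe_le_bot _)
  · rw [hsup] at hle
    rw [wdeg, hsup]
    exact WithBot.coe_le_coe.mp hle

lemma eval_one_homog {σ : Type*} (ω : σ → ℤ) (f : MvPolynomial σ ℂ) :
    (homog ω f).eval 1 = f := by
  rw [homog, Polynomial.eval_finsetSum]
  simp [MvPolynomial.support_sum_monomial_coeff]

lemma eval_zero_homog {σ : Type*} (ω : σ → ℤ) (f : MvPolynomial σ ℂ) :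
    (homog ω f).eval 0 = initForm ω f := by
  rw [homog, initForm, Polynomial.eval_finsetSum, Finset.sum_filter]
  refine Finset.sum_congr rfl fun α hα => ?_
  have hle := wdot_le_wdeg ω hα
  simp only [Polynomial.eval_mul, Polynomial.eval_C, Polynomial.eval_pow, Polynomial.eval_X]
  by_cases h : wdot ω α = wdeg ω f
  · simp [h]
  · rw [zero_pow (by omega : (wdeg ω f - wdot ω α).toNat ≠ 0)]
    simp [h]

lemma Polynomial.evalRingHom_image_adjoin {R A : Type*} [CommSemiring R] [CommSemiring A]
    [Algebra R A] (c : A) (s : Set A[X]) :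
    evalRingHom c '' (Algebra.adjoin R s : Set A[X])
      = Algebra.adjoin R (evalRingHom c '' s) := by
  have h := AlgHom.map_adjoin ((aeval (R := A) c).restrictScalars R) s
  simpa only [Subalgebra.coe_map, AlgHom.coe_restrictScalars', coe_aeval_eq_eval,
    coe_evalRingHom] using congrArg (fun S : Subalgebra R A => (S : Set A)) h

theorem sagbi_degeneration_fibres_general {n k : ℕ} (ω : Fin n → ℤ)
    (b : Fin (k + 1) → MvPolynomial (Fin n) ℂ)
    (hsagbi : IsSagbiBasis ω b)
    (T : Subalgebra ℂ (Polynomial (MvPolynomial (Fin n) ℂ)))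
    (hT : T = Algebra.adjoin ℂ (Set.range fun j => homog ω (b j))) :
    (Polynomial.evalRingHom (1 : MvPolynomial (Fin n) ℂ)) ''
        (T : Set (Polynomial (MvPolynomial (Fin n) ℂ)))
      = (Algebra.adjoin ℂ (Set.range b) : Set (MvPolynomial (Fin n) ℂ)) ∧
    (Polynomial.evalRingHom (0 : MvPolynomial (Fin n) ℂ)) ''
        (T : Set (Polynomial (MvPolynomial (Fin n) ℂ)))
      = (Submodule.span ℂ
          {g | ∃ f ∈ Algebra.adjoin ℂ (Set.range b), f ≠ 0 ∧ g = initForm ω f} :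
            Set (MvPolynomial (Fin n) ℂ)) := by
  subst hT
  simp only [evalRingHom_image_adjoin, ← Set.range_comp]
  constructor
  · simp only [Function.comp_def, coe_evalRingHom, eval_one_homog]
  · simp only [Function.comp_def, coe_evalRingHom, eval_zero_homog]
    rw [hsagbi]
    rfl

/-- If the nonzero polynomials `b₀,…,b_k` have single-term initial forms
and form a SAGBI basis for `S = ℂ[b₀,…,b_k]` with respect to `ω`, and `T` is the
ℂ-subalgebra of `ℂ[x₁,…,xₙ][t]` generated by `(b₀)_t^ω,…,(b_k)_t^ω`, then the image of
`T` under the evaluation `t ↦ 1` equals `S`, and the image of `T` under the evaluation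
`t ↦ 0` equals the initial algebra `in_ω(S)`, i.e. the ℂ-linear span of
`{in_ω(f) : f ∈ S, f ≠ 0}`. -/
theorem sagbi_degeneration_fibres {n k : ℕ} (ω : Fin n → ℤ)
    (b : Fin (k + 1) → MvPolynomial (Fin n) ℂ) (hb : ∀ j, b j ≠ 0)
    (hmono : ∀ j, ∃ (a : Fin n →₀ ℕ) (cc : ℂ), cc ≠ 0 ∧
      initForm ω (b j) = monomial a cc)
    (hsagbi : IsSagbiBasis ω b)
    (T : Subalgebra ℂ (Polynomial (MvPolynomial (Fin n) ℂ)))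
    (hT : T = Algebra.adjoin ℂ (Set.range fun j => homog ω (b j))) :
    (Polynomial.evalRingHom (1 : MvPolynomial (Fin n) ℂ)) ''
        (T : Set (Polynomial (MvPolynomial (Fin n) ℂ)))
      = (Algebra.adjoin ℂ (Set.range b) : Set (MvPolynomial (Fin n) ℂ)) ∧
    (Polynomial.evalRingHom (0 : MvPolynomial (Fin n) ℂ)) ''
        (T : Set (Polynomial (MvPolynomial (Fin n) ℂ)))
      = (Submodule.span ℂ
          {g | ∃ f ∈ Algebra.adjoin ℂ (Set.range b), f ≠ 0 ∧ g = initForm ω f} :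
            Set (MvPolynomial (Fin n) ℂ)) :=
  sagbi_degeneration_fibres_general ω b hsagbi T hT
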